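/- arXiv:2211.13872 — 6 statements merged into one kernel-verified Lean document; each statement's English description precedes it below -/
import Mathlib

section
/- Let $f:[0,1]\to\mathbb R$ be continuous and let $n\ge 1$ be an integer. Define $f_n:(0,1)\to\mathbb R$ by $f_n(r) = -r^{-4n}\int_0^r s^{8n-1}\Big(\int_s^1 \tau^{1-4n} f(\tau)\,d\tau\Big)ds$. Then $f_n$ is twice continuously differentiable on $(0,1)$ and satisfies $f_n''(r)+\frac{1}{r}f_n'(r)-\frac{16n^2}{r^2}f_n(r) = f(r)$ for all $r\in(0,1)$. -/
open Real MeasureTheory Set intervalIntegral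

/-! Variation of constants for the Euler operator `L u = u'' + u'/r - N² u/r²` (here `N = 4n`),
whose kernel is spanned by `r^{±N}`. If `F' = r^{2N-1} g` and `g' = -r^{1-N} f`, then two
differentiations of `u = -r^{-N} F` give `L u = f` for every integer `N`. The only analytic
point is that `F(r) = ∫₀^r s^{2N-1} g(s) ds` is a genuine integral: for `N ≥ 1`,
`|g(s)| ≤ ‖f‖_∞ s^{1-N}`, so the integrand is bounded by `‖f‖_∞ s^N`. -/

theorem contDiffOn_two_of_hasDerivAt_deriv {𝕜 E : Type*} [NontriviallyNormedField 𝕜]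
    [NormedAddCommGroup E] [NormedSpace 𝕜 E] {U : Set 𝕜} {u u'' : 𝕜 → E} (hU : IsOpen U)
    (hu : DifferentiableOn 𝕜 u U) (hu' : ∀ x ∈ U, HasDerivAt (deriv u) (u'' x) x)
    (hu'' : ContinuousOn u'' U) : ContDiffOn 𝕜 2 u U := by
  have hu'1 : ContDiffOn 𝕜 1 (deriv u) U := by
    rw [show (1 : WithTop ℕ∞) = 0 + 1 from rfl, contDiffOn_succ_iff_deriv_of_isOpen hU]
    exact ⟨fun x hx => (hu' x hx).differentiableAt.differentiableWithinAt, by simp,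
      contDiffOn_zero.mpr (hu''.congr fun x hx => (hu' x hx).deriv)⟩
  rw [show (2 : WithTop ℕ∞) = 1 + 1 from rfl, contDiffOn_succ_iff_deriv_of_isOpen hU]
  exact ⟨hu, by simp, hu'1⟩

section EulerOperator

variable {N : ℤ} {f g F : ℝ → ℝ} {r : ℝ}

theorem hasDerivAt_neg_zpow_mul (hr : r ≠ 0) (hF : HasDerivAt F (r ^ (2 * N - 1) * g r) r) :
    HasDerivAt (fun x => -(x ^ (-N)) * F x) (N * r ^ (-N - 1) * F r - r ^ (N - 1) * g r) r := by
  refine (((hasDerivAt_zpow (-N) r (.inl hr)).neg).mul hF).congr_deriv ?_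
  have : r ^ (N - 1) = r ^ (-N) * r ^ (2 * N - 1) := by rw [← zpow_add₀ hr]; ring_nf
  rw [this, Pi.neg_apply]; push_cast; ring

theorem hasDerivAt_zpow_mul_sub_zpow_mul (hr : r ≠ 0)
    (hF : HasDerivAt F (r ^ (2 * N - 1) * g r) r) (hg : HasDerivAt g (-(r ^ (1 - N) * f r)) r) :
    HasDerivAt (fun x => N * x ^ (-N - 1) * F x - x ^ (N - 1) * g x)
      (-(N * (N + 1)) * r ^ (-N - 2) * F r + r ^ (N - 2) * g r + f r) r := by
  refine ((((hasDerivAt_zpow (-N - 1) r (.inl hr)).const_mul (N : ℝ)).mul hF).sub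
    ((hasDerivAt_zpow (N - 1) r (.inl hr)).mul hg)).congr_deriv ?_
  have e1 : r ^ (-N - 1) * r ^ (2 * N - 1) = r ^ (N - 2) := by rw [← zpow_add₀ hr]; ring_nf
  have e2 : r ^ (N - 1) * r ^ (1 - N) = 1 := by rw [← zpow_add₀ hr]; simp
  have e3 : r ^ (-N - 1 - 1) = r ^ (-N - 2) := by ring_nf
  have e4 : r ^ (N - 1 - 1) = r ^ (N - 2) := by ring_nf
  rw [e3, e4]
  push_cast
  linear_combination (N * g r) * e1 + f r * e2

theorem eulerOperator_identity (hr : r ≠ 0) :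
    (-(N * (N + 1)) * r ^ (-N - 2) * F r + r ^ (N - 2) * g r + f r)
      + 1 / r * (N * r ^ (-N - 1) * F r - r ^ (N - 1) * g r)
      - N ^ 2 / r ^ 2 * (-(r ^ (-N)) * F r) = f r := by
  have e1 : r ^ (-N - 2) = r ^ (-N) / r ^ 2 := by
    rw [zpow_sub₀ hr]; norm_cast
  have e2 : r ^ (-N - 1) = r ^ (-N) / r := by rw [zpow_sub_one₀ hr, div_eq_mul_inv]
  have e3 : r ^ (N - 2) = r ^ (N - 1) / r := by
    rw [show N - 2 = N - 1 - 1 by ring, zpow_sub_one₀ hr, div_eq_mul_inv]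
  rw [e1, e2, e3]
  field_simp
  ring

theorem contDiffOn_and_eulerOperator_eq_of_hasDerivAt {U : Set ℝ} (hU : IsOpen U)
    (hU0 : (0 : ℝ) ∉ U)
    (hF : ∀ r ∈ U, HasDerivAt F (r ^ (2 * N - 1) * g r) r)
    (hg : ∀ r ∈ U, HasDerivAt g (-(r ^ (1 - N) * f r)) r) (hf : ContinuousOn f U)
    {u : ℝ → ℝ} (hu : EqOn u (fun x => -(x ^ (-N)) * F x) U) :
    ContDiffOn ℝ 2 u U ∧
      ∀ r ∈ U, deriv (deriv u) r + 1 / r * deriv u r - N ^ 2 / r ^ 2 * u r = f r := by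
  have hr0 : ∀ r ∈ U, r ≠ 0 := fun r hr h => hU0 (h ▸ hr)
  have hu' : ∀ r ∈ U, HasDerivAt u (N * r ^ (-N - 1) * F r - r ^ (N - 1) * g r) r :=
    fun r hr => (hasDerivAt_neg_zpow_mul (hr0 r hr) (hF r hr)).congr_of_eventuallyEq
      (Filter.eventuallyEq_of_mem (hU.mem_nhds hr) hu)
  have hderiv : EqOn (deriv u) (fun x => N * x ^ (-N - 1) * F x - x ^ (N - 1) * g x) U :=
    fun r hr => (hu' r hr).deriv
  have hu'' : ∀ r ∈ U, HasDerivAt (deriv u)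
      (-(N * (N + 1)) * r ^ (-N - 2) * F r + r ^ (N - 2) * g r + f r) r := fun r hr =>
    (hasDerivAt_zpow_mul_sub_zpow_mul (hr0 r hr) (hF r hr) (hg r hr)).congr_of_eventuallyEq
      (Filter.eventuallyEq_of_mem (hU.mem_nhds hr) hderiv)
  have hFc : ContinuousOn F U := fun r hr => (hF r hr).continuousAt.continuousWithinAt
  have hgc : ContinuousOn g U := fun r hr => (hg r hr).continuousAt.continuousWithinAt
  refine ⟨contDiffOn_two_of_hasDerivAt_deriv hU
    (fun r hr => (hu' r hr).differentiableAt.differentiableWithinAt) hu'' ?_, fun r hr => ?_⟩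
  · fun_prop (disch := exact fun x hx => .inl (hr0 x hx))
  · rw [(hu'' r hr).deriv, (hu' r hr).deriv, hu hr]
    exact eulerOperator_identity (hr0 r hr)

end EulerOperator

theorem hasDerivAt_integral_left_of_continuousOn {E : Type*} [NormedAddCommGroup E]
    [NormedSpace ℝ E] [CompleteSpace E] {h : ℝ → E} {a b s : ℝ} (hh : ContinuousOn h (Ioc a b))
    (hs : s ∈ Ioo a b) : HasDerivAt (fun x => ∫ τ in x..b, h τ) (-h s) s := by
  have hhs : ContinuousOn h (Ioo a b) := hh.mono Ioo_subset_Ioc_self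
  refine integral_hasDerivAt_left ?_ (hhs.stronglyMeasurableAtFilter isOpen_Ioo s hs)
    (hhs.continuousAt (isOpen_Ioo.mem_nhds hs))
  exact (hh.mono fun x hx => ⟨hs.1.trans_le hx.1, hx.2⟩).intervalIntegrable_of_Icc hs.2.le

section WeightedPrimitive

variable {f : ℝ → ℝ} {N : ℤ}

theorem abs_integral_zpow_mul_le (hN : 1 ≤ N) {M s : ℝ} (hs : s ∈ Ioc 0 1)
    (hM : ∀ τ ∈ Icc s 1, |f τ| ≤ M) : |∫ τ in s..1, τ ^ (1 - N) * f τ| ≤ M * s ^ (1 - N) := by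
  have hM0 : 0 ≤ M := (abs_nonneg _).trans (hM 1 ⟨hs.2, le_rfl⟩)
  have hweight : ∀ τ ∈ Icc s 1, τ ^ (1 - N) ≤ s ^ (1 - N) := fun τ hτ => by
    rw [show 1 - N = -(N - 1) by ring, zpow_neg, zpow_neg]
    exact inv_anti₀ (zpow_pos hs.1 _) (zpow_le_zpow_left₀ (by omega) hs.1.le hτ.1)
  calc |∫ τ in s..1, τ ^ (1 - N) * f τ| ≤ M * s ^ (1 - N) * |1 - s| := by
        rw [← Real.norm_eq_abs]
        refine intervalIntegral.norm_integral_le_of_norm_le_const fun τ hτ => ?_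
        rw [uIoc_of_le hs.2] at hτ
        have hτ0 : 0 < τ := hs.1.trans hτ.1
        rw [norm_mul, norm_zpow, Real.norm_of_nonneg hτ0.le, Real.norm_eq_abs, mul_comm M]
        exact mul_le_mul (hweight τ (Ioc_subset_Icc_self hτ)) (hM τ (Ioc_subset_Icc_self hτ))
          (abs_nonneg _) (zpow_nonneg hs.1.le _)
    _ ≤ M * s ^ (1 - N) := by
        rw [abs_of_nonneg (by linarith [hs.2])]
        exact mul_le_of_le_one_right (mul_nonneg hM0 (zpow_nonneg hs.1.le _)) (by linarith [hs.1])

variable (hf : ContinuousOn f (Icc 0 1))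
include hf

theorem hasDerivAt_integral_zpow_mul {s : ℝ} (hs : s ∈ Ioo 0 1) :
    HasDerivAt (fun x => ∫ τ in x..1, τ ^ (1 - N) * f τ) (-(s ^ (1 - N) * f s)) s :=
  hasDerivAt_integral_left_of_continuousOn
    (((continuousOn_zpow₀ _).mono fun _ hx => hx.1.ne').mul (hf.mono Ioc_subset_Icc_self)) hs

theorem continuousOn_zpow_mul_integral (k : ℤ) :
    ContinuousOn (fun s => s ^ k * ∫ τ in s..1, τ ^ (1 - N) * f τ) (Ioo 0 1) :=
  ((continuousOn_zpow₀ _).mono fun _ hx => hx.1.ne').mul fun _ hs =>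
    (hasDerivAt_integral_zpow_mul hf hs).continuousAt.continuousWithinAt

theorem intervalIntegrable_zpow_mul_integral (hN : 1 ≤ N) {t : ℝ} (ht : t ∈ Ioo 0 1) :
    IntervalIntegrable (fun s => s ^ (2 * N - 1) * ∫ τ in s..1, τ ^ (1 - N) * f τ) volume 0 t := by
  obtain ⟨M, hM⟩ := isCompact_Icc.exists_bound_of_continuousOn hf
  have hsub : Ioc 0 t ⊆ Ioo 0 1 := fun s hs => ⟨hs.1, hs.2.trans_lt ht.2⟩
  rw [intervalIntegrable_iff_integrableOn_Ioc_of_le ht.1.le]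
  refine IntegrableOn.of_bound measure_Ioc_lt_top
    (((continuousOn_zpow_mul_integral hf _).mono hsub).aestronglyMeasurable measurableSet_Ioc) M
    ((ae_restrict_iff' measurableSet_Ioc).mpr (.of_forall fun s hs => ?_))
  have hs0 : 0 < s := hs.1
  have hs1 : s ≤ 1 := (hsub hs).2.le
  have hbound := abs_integral_zpow_mul_le hN ⟨hs0, hs1⟩ fun τ hτ => hM τ ⟨hs0.le.trans hτ.1, hτ.2⟩
  calc ‖s ^ (2 * N - 1) * ∫ τ in s..1, τ ^ (1 - N) * f τ‖
      ≤ s ^ (2 * N - 1) * (M * s ^ (1 - N)) := by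
        rw [norm_mul, norm_zpow, Real.norm_of_nonneg hs0.le, Real.norm_eq_abs]
        exact mul_le_mul_of_nonneg_left hbound (zpow_nonneg hs0.le _)
    _ = M * s ^ N := by
        rw [mul_left_comm, ← zpow_add₀ hs0.ne']; ring_nf
    _ ≤ M := mul_le_of_le_one_right ((norm_nonneg _).trans (hM 0 ⟨le_rfl, zero_le_one⟩))
        (zpow_le_one₀ hs0 hs1 (by omega))

theorem hasDerivAt_integral_zpow_mul_integral (hN : 1 ≤ N) {r : ℝ} (hr : r ∈ Ioo 0 1) :
    HasDerivAt (fun x => ∫ s in 0..x, s ^ (2 * N - 1) * ∫ τ in s..1, τ ^ (1 - N) * f τ)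
      (r ^ (2 * N - 1) * ∫ τ in r..1, τ ^ (1 - N) * f τ) r :=
  integral_hasDerivAt_right (intervalIntegrable_zpow_mul_integral hf hN hr)
    ((continuousOn_zpow_mul_integral hf _).stronglyMeasurableAtFilter isOpen_Ioo r hr)
    ((continuousOn_zpow_mul_integral hf _).continuousAt (isOpen_Ioo.mem_nhds hr))

end WeightedPrimitive

theorem stmt3 (f : ℝ → ℝ) (hf : ContinuousOn f (Set.Icc 0 1)) (n : ℕ) (hn : 1 ≤ n)
    (fn : ℝ → ℝ)
    (hfn : ∀ r ∈ Set.Ioo (0:ℝ) 1,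
      fn r = -(r ^ (-(4 * (n:ℤ)))) *
        ∫ s in (0:ℝ)..r, s ^ (8 * (n:ℤ) - 1) * ∫ τ in s..(1:ℝ), τ ^ (1 - 4 * (n:ℤ)) * f τ) :
    ContDiffOn ℝ 2 fn (Set.Ioo 0 1) ∧
    ∀ r ∈ Set.Ioo (0:ℝ) 1,
      deriv (deriv fn) r + (1 / r) * deriv fn r - (16 * (n:ℝ) ^ 2 / r ^ 2) * fn r = f r := by
  have hN : 1 ≤ 4 * (n : ℤ) := by omega
  rw [show 8 * (n : ℤ) - 1 = 2 * (4 * n) - 1 by ring] at hfn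
  have h16 : 16 * (n : ℝ) ^ 2 = ((4 * n : ℤ) : ℝ) ^ 2 := by push_cast; ring
  rw [h16]
  exact contDiffOn_and_eulerOperator_eq_of_hasDerivAt isOpen_Ioo (fun h => lt_irrefl 0 h.1)
    (fun r hr => hasDerivAt_integral_zpow_mul_integral hf hN hr)
    (fun r hr => hasDerivAt_integral_zpow_mul hf hr) (hf.mono Ioo_subset_Icc_self) hfn
end

section
/- There exists a universal constant $C>0$ with the following property. Let $\bar f:[0,1]\to[0,\infty)$ be continuously differentiable and concave with $\bar f(1)=0$, let $f:[0,1]\to\mathbb R$ be continuous with $|f|\le\bar f$ on $[0,1]$, let $n\ge 1$ be an integer and $r\in(0,1)$. Then $\Big| n\,r^{4n-2}\int_r^1 \tau^{1-4n} f(\tau)\,d\tau \Big| \le C\Big(\bar f(r) + \frac{1}{n}\sup_{\tau\in[0,r]} \tau\,\bar f'(\tau)\Big).$ -/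
/-!
Concavity puts `fbar` below its tangent line at `r`, so on `[r, 1]`
`|f τ| ≤ fbar r + (fbar' r)⁺ (τ - r)`. Against the weight `τ ^ (-p - 1)`, `p = 4n - 2`, this
affine majorant integrates explicitly to at most `r ^ (-p) (fbar r / p + r (fbar' r)⁺ / (p (p - 1)))`,
and `r (fbar' r)⁺ ≤ sup_{[0, r]} τ fbar' τ` because the supremum is at least its value `0` at
`τ = 0`. The constant `C = 1` works.
-/

open Real MeasureTheory Set intervalIntegral

theorem ConcaveOn.le_add_deriv_mul_sub {S : Set ℝ} {f : ℝ → ℝ} {x y : ℝ} (hf : ConcaveOn ℝ S f)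
    (hx : x ∈ S) (hy : y ∈ S) (hxy : x ≤ y) (hd : DifferentiableAt ℝ f x) :
    f y ≤ f x + deriv f x * (y - x) := by
  rcases hxy.eq_or_lt with rfl | hlt
  · simp
  have hslope := hf.slope_le_deriv hx hy hlt hd
  rw [slope_def_field, div_le_iff₀ (sub_pos.2 hlt)] at hslope
  linarith

theorem norm_integral_zpow_mul_le_of_concaveOn {S : Set ℝ} {f g : ℝ → ℝ} {r b : ℝ} (k : ℤ)
    (hg : ConcaveOn ℝ S g) (hr : 0 < r) (hrb : r ≤ b) (hS : Icc r b ⊆ S)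
    (hd : DifferentiableAt ℝ g r) (hfg : ∀ τ ∈ Icc r b, |f τ| ≤ g τ) :
    ‖∫ τ in r..b, τ ^ k * f τ‖ ≤ ∫ τ in r..b, τ ^ k * (g r + max (deriv g r) 0 * (τ - r)) := by
  refine norm_integral_le_of_norm_le hrb (ae_of_all _ fun τ hτ => ?_) ?_
  · have hτ0 : 0 < τ := hr.trans hτ.1
    have hτ : τ ∈ Icc r b := Ioc_subset_Icc_self hτ
    have htangent := hg.le_add_deriv_mul_sub (hS (left_mem_Icc.2 hrb)) (hS hτ) hτ.1 hd
    have hslope : deriv g r * (τ - r) ≤ max (deriv g r) 0 * (τ - r) :=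
      mul_le_mul_of_nonneg_right (le_max_left _ _) (sub_nonneg.2 hτ.1)
    rw [norm_mul, norm_of_nonneg (zpow_pos hτ0 _).le, norm_eq_abs]
    exact mul_le_mul_of_nonneg_left ((hfg τ hτ).trans (by linarith)) (zpow_pos hτ0 _).le
  · refine ContinuousOn.intervalIntegrable fun τ hτ => ?_
    rw [uIcc_of_le hrb] at hτ
    exact ((continuousAt_zpow₀ τ k (Or.inl (hr.trans_le hτ.1).ne')).mul
      (by fun_prop)).continuousWithinAt

theorem zpow_mul_integral_zpow_mul_affine_le {r a b : ℝ} {p : ℤ} (hr : 0 < r) (hr1 : r ≤ 1)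
    (hp : 1 < p) (ha : 0 ≤ a) (hb : 0 ≤ b) :
    r ^ p * ∫ τ in r..1, τ ^ (-p - 1) * (a + b * (τ - r)) ≤ a / p + b * r / (p * (p - 1)) := by
  have hP : (1 : ℝ) < p := by exact_mod_cast hp
  have h0 : (0 : ℝ) ∉ uIcc r 1 := by
    rw [uIcc_of_le hr1]
    exact fun h => hr.not_ge h.1
  have hsplit : ∫ τ in r..1, τ ^ (-p - 1) * (a + b * (τ - r))
      = (a - b * r) * (∫ τ in r..1, τ ^ (-p - 1)) + b * ∫ τ in r..1, τ ^ (-p) := by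
    rw [← intervalIntegral.integral_const_mul, ← intervalIntegral.integral_const_mul,
      ← intervalIntegral.integral_add]
    · refine integral_congr fun τ hτ => ?_
      have hτ0 : τ ≠ 0 := fun h => h0 (h ▸ hτ)
      rw [zpow_sub_one₀ hτ0]
      field_simp
      ring
    · exact (intervalIntegrable_zpow (Or.inr h0)).const_mul _
    · exact (intervalIntegrable_zpow (Or.inr h0)).const_mul _
  rw [hsplit, integral_zpow (Or.inr ⟨by omega, h0⟩), integral_zpow (Or.inr ⟨by omega, h0⟩)]
  simp only [one_zpow, show -p - 1 + 1 = -p by ring, zpow_add_one₀ hr.ne', zpow_neg, inv_one]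
  push_cast
  -- `r ^ p` times the integral over `[r, ∞)` is exactly the bound; `hgap` is the part over `[1, ∞)`
  have hgap : 0 ≤ a / p + b * (1 / (p - 1) - r / p) := by
    have hr_p : r / p ≤ 1 / (p - 1) := div_le_div₀ zero_le_one hr1 (by linarith) (by linarith)
    have ha_p : 0 ≤ a / p := div_nonneg ha (by linarith)
    nlinarith
  have hexact : r ^ p * ((a - b * r) * ((1 - (r ^ p)⁻¹) / (-p - 1 + 1))
        + b * ((1 - (r ^ p)⁻¹ * r) / (-p + 1)))
      = a / p + b * r / (p * (p - 1)) - r ^ p * (a / p + b * (1 / (p - 1) - r / p)) := by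
    have : (p : ℝ) ≠ 0 := by linarith
    have : (p : ℝ) - 1 ≠ 0 := by linarith
    have : (-p + 1 : ℝ) ≠ 0 := by linarith
    have : (-p - 1 + 1 : ℝ) ≠ 0 := by linarith
    field_simp
    ring
  rw [hexact]
  linarith [mul_nonneg (zpow_pos hr p).le hgap]

theorem max_le_sSup_image_Icc {φ : ℝ → ℝ} {r : ℝ} (hr : 0 ≤ r) (hφ0 : φ 0 = 0)
    (hφ : BddAbove (φ '' Icc 0 r)) : max (φ r) 0 ≤ sSup (φ '' Icc 0 r) := by
  refine max_le (le_csSup hφ (mem_image_of_mem φ ⟨hr, le_rfl⟩)) ?_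
  simpa [hφ0] using le_csSup hφ (mem_image_of_mem φ (left_mem_Icc.2 hr))

theorem mul_div_add_div_le_add_one_div_mul {N a c M : ℝ} (hN : 1 ≤ N) (ha : 0 ≤ a) (hc : 0 ≤ c)
    (hcM : c ≤ M) :
    N * (a / (4 * N - 2) + c / ((4 * N - 2) * (4 * N - 2 - 1))) ≤ a + 1 / N * M := by
  have ha_le : N * (a / (4 * N - 2)) ≤ a := by
    rw [mul_div_assoc', div_le_iff₀ (by linarith)]
    nlinarith
  have hc_le : N * (c / ((4 * N - 2) * (4 * N - 2 - 1))) ≤ c / N := by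
    rw [mul_div_assoc', div_le_div_iff₀ (by nlinarith) (by linarith)]
    nlinarith [mul_nonneg hc (mul_nonneg (sub_nonneg.2 hN) (sub_nonneg.2 hN))]
  have hcM' : c / N ≤ 1 / N * M := by
    rw [one_div_mul_eq_div]
    exact div_le_div_of_nonneg_right hcM (by linarith)
  linarith

theorem stmt5 :
    ∃ C > (0:ℝ), ∀ (fbar : ℝ → ℝ),
      (∀ r ∈ Set.Icc (0:ℝ) 1, 0 ≤ fbar r) →
      (∀ x ∈ Set.Icc (0:ℝ) 1, DifferentiableAt ℝ fbar x) →
      ContinuousOn (deriv fbar) (Set.Icc 0 1) →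
      ConcaveOn ℝ (Set.Icc 0 1) fbar →
      fbar 1 = 0 →
      ∀ (f : ℝ → ℝ), ContinuousOn f (Set.Icc 0 1) →
      (∀ r ∈ Set.Icc (0:ℝ) 1, |f r| ≤ fbar r) →
      ∀ (n : ℕ), 1 ≤ n → ∀ r ∈ Set.Ioo (0:ℝ) 1,
        |(n:ℝ) * r ^ (4 * (n:ℤ) - 2) * ∫ τ in r..(1:ℝ), τ ^ (1 - 4 * (n:ℤ)) * f τ|
          ≤ C * (fbar r + (1 / (n:ℝ)) *
              sSup ((fun τ => τ * deriv fbar τ) '' Set.Icc 0 r)) := by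
  refine ⟨1, one_pos, fun fbar hfbar hdiff hderiv hconc _ f _ hf n hn r ⟨hr0, hr1⟩ => ?_⟩
  have hr : r ∈ Icc (0:ℝ) 1 := ⟨hr0.le, hr1.le⟩
  set A := max (deriv fbar r) 0
  have hA : 0 ≤ A := le_max_right _ _
  have hint := norm_integral_zpow_mul_le_of_concaveOn (1 - 4 * n) hconc hr0 hr1.le
    (Icc_subset_Icc hr0.le le_rfl) (hdiff r hr) fun τ hτ => hf τ ⟨hr0.le.trans hτ.1, hτ.2⟩
  have haffine := zpow_mul_integral_zpow_mul_affine_le (p := 4 * n - 2) hr0 hr1.le (by omega)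
    (hfbar r hr) hA
  rw [show -(4 * (n:ℤ) - 2) - 1 = 1 - 4 * n by ring] at haffine
  push_cast at haffine
  have hsup : A * r ≤ sSup ((fun τ => τ * deriv fbar τ) '' Icc 0 r) := by
    have hbdd : BddAbove ((fun τ => τ * deriv fbar τ) '' Icc 0 r) :=
      (isCompact_Icc.image_of_continuousOn
        (continuousOn_id.mul (hderiv.mono (Icc_subset_Icc le_rfl hr1.le)))).bddAbove
    rw [mul_comm, mul_max_of_nonneg _ _ hr0.le, mul_zero]
    exact max_le_sSup_image_Icc (φ := fun τ => τ * deriv fbar τ) hr0.le (zero_mul _) hbdd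
  rw [one_mul, abs_mul, abs_mul, abs_of_nonneg (zpow_pos hr0 _).le, Nat.abs_cast, mul_assoc]
  calc (n:ℝ) * (r ^ (4 * (n:ℤ) - 2) * |∫ τ in r..1, τ ^ (1 - 4 * (n:ℤ)) * f τ|)
      ≤ n * (r ^ (4 * (n:ℤ) - 2) *
          ∫ τ in r..1, τ ^ (1 - 4 * (n:ℤ)) * (fbar r + A * (τ - r))) := by
        gcongr
        exact hint
    _ ≤ n * (fbar r / (4 * n - 2) + A * r / ((4 * n - 2) * (4 * n - 2 - 1))) := by gcongr
    _ ≤ _ := mul_div_add_div_le_add_one_div_mul (by exact_mod_cast hn) (hfbar r hr)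
        (mul_nonneg hA hr0.le) hsup
end

section
/- There exists a universal constant $C>0$ with the following property. Let $\bar f:[0,1]\to[0,\infty)$ be continuously differentiable and concave with $\bar f(1)=0$, let $f:[0,1]\to\mathbb R$ be continuous with $|f|\le\bar f$ on $[0,1]$, let $n\ge 1$ be an integer, and define $f_n(r) = -r^{-4n}\int_0^r s^{8n-1}\big(\int_s^1 \tau^{1-4n} f(\tau)\,d\tau\big)ds$ for $r\in(0,1)$. Then for all $r\in(0,1)$: $|f_n'(r)| \le \frac{C\,r}{n}\,M(r)$, where $M(r)=\sup_{\tau\in[0,r]}\bar f(\tau)+\sup_{\tau\in[0,r]}\tau\bar f'(\tau)$. -/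
/-! Concavity puts `fbar` below its tangent at `r`, so `|f τ| ≤ M₁ + (M₂ / r) τ` on `[0, 1]`,
where `M₁` and `M₂` are the two suprema in `M(r)`. Integrating this majorant against `τ ^ (1 - 4n)`
gives `|∫_s^1 τ ^ (1 - 4n) f τ| ≤ M(r) / n * s ^ (2 - 4n)` for `s ≤ r`, so the integrand `φ` of the
outer integral satisfies `|φ s| ≤ M(r) / n * s ^ (4n + 1)`. Differentiating
`f_n = -r ^ (-4n) ∫_0^r φ` then gives
`|f_n' r| ≤ 4n r ^ (-4n-1) |∫_0^r φ| + r ^ (-4n) |φ r| ≤ 2 r M(r) / n`, i.e. `C = 2`. -/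

open Real MeasureTheory Set intervalIntegral Filter Topology

lemma ConcaveOn.le_add_div_mul {g : ℝ → ℝ} {a b c r τ : ℝ} (hg : ConcaveOn ℝ (Icc 0 b) g)
    (hr : r ∈ Ioc 0 b) (hgr : DifferentiableAt ℝ g r) (ha : ∀ σ ∈ Icc 0 r, g σ ≤ a) (hc : 0 ≤ c)
    (hrc : r * deriv g r ≤ c) (hτ : τ ∈ Icc 0 b) : g τ ≤ a + c / r * τ := by
  rcases le_or_gt τ r with hτr | hrτ
  · have : 0 ≤ c / r * τ := by have := hr.1; have := hτ.1; positivity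
    linarith [ha τ ⟨hτ.1, hτr⟩]
  · have htangent := hg.slope_le_deriv ⟨hr.1.le, hr.2⟩ hτ hrτ hgr
    rw [slope_def_field, div_le_iff₀ (sub_pos.2 hrτ)] at htangent
    have : deriv g r * (τ - r) ≤ c / r * τ := by
      rw [div_mul_eq_mul_div, le_div_iff₀ hr.1]
      nlinarith [hr.1, hτ.1]
    linarith [ha r ⟨hr.1.le, le_rfl⟩]

lemma sSup_image_Icc_mul_nonneg {h : ℝ → ℝ} {r : ℝ} (hh : ContinuousOn h (Icc 0 r)) (hr : 0 ≤ r) :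
    0 ≤ sSup ((fun σ => σ * h σ) '' Icc 0 r) := by
  simpa using (continuousOn_id.mul hh).le_sSup_image_Icc (left_mem_Icc.2 hr)

lemma ConcaveOn.le_sSup_add_sSup_div_mul {g : ℝ → ℝ} {b r τ : ℝ} (hg : ConcaveOn ℝ (Icc 0 b) g)
    (hgd : ∀ x ∈ Icc 0 b, DifferentiableAt ℝ g x) (hg' : ContinuousOn (deriv g) (Icc 0 b))
    (hr : r ∈ Ioc 0 b) (hτ : τ ∈ Icc 0 b) :
    g τ ≤ sSup (g '' Icc 0 r) + sSup ((fun σ => σ * deriv g σ) '' Icc 0 r) / r * τ := by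
  have hsub : Icc 0 r ⊆ Icc 0 b := Icc_subset_Icc_right hr.2
  have hrr : r ∈ Icc 0 r := right_mem_Icc.2 hr.1.le
  exact hg.le_add_div_mul hr (hgd r (hsub hrr))
    (fun σ => ContinuousOn.le_sSup_image_Icc fun x hx =>
      (hgd x (hsub hx)).continuousAt.continuousWithinAt)
    (sSup_image_Icc_mul_nonneg (hg'.mono hsub) hr.1.le)
    ((continuousOn_id.mul (hg'.mono hsub)).le_sSup_image_Icc hrr) hτ

lemma integral_zpow_le_div {s c : ℝ} {k : ℤ} (hs : 0 < s) (hs1 : s ≤ 1) (hc : 0 < c)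
    (hck : c ≤ -(k + 1)) : ∫ τ in s..1, τ ^ k ≤ s ^ (k + 1) / c := by
  have hk : (k : ℝ) ≠ -1 := by intro h; linarith
  have h0 : (0 : ℝ) ∉ uIcc s 1 := by
    rw [uIcc_of_le hs1]; exact fun h => hs.not_ge h.1
  rw [integral_zpow (Or.inr ⟨by exact_mod_cast hk, h0⟩), one_zpow]
  have hpos : 0 < s ^ (k + 1) := zpow_pos hs _
  calc (1 - s ^ (k + 1)) / ((k : ℝ) + 1) = (s ^ (k + 1) - 1) / (-(k + 1)) := by
        rw [div_neg, ← neg_div, neg_sub]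
    _ ≤ s ^ (k + 1) / (-(k + 1)) := by gcongr <;> linarith
    _ ≤ s ^ (k + 1) / c := by gcongr

lemma abs_integral_zpow_mul_le_s8 {f : ℝ → ℝ} {s a b c : ℝ} {k : ℤ} (hs : 0 < s) (hs1 : s ≤ 1)
    (hc : 0 < c) (hck : c ≤ -(k + 2)) (ha : 0 ≤ a) (hb : 0 ≤ b)
    (hfab : ∀ τ ∈ Icc s 1, |f τ| ≤ a + b * τ) :
    |∫ τ in s..1, τ ^ k * f τ| ≤ (a + b * s) / c * s ^ (k + 1) := by
  have hzpow : ∀ j : ℤ, ContinuousOn (fun τ : ℝ => τ ^ j) (uIcc s 1) := fun j =>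
    continuousOn_id.zpow₀ j fun τ hτ => Or.inl (hs.trans_le (uIcc_of_le hs1 ▸ hτ).1).ne'
  have hmaj : ∀ τ ∈ Ioc s 1, ‖τ ^ k * f τ‖ ≤ a * τ ^ k + b * τ ^ (k + 1) := fun τ hτ => by
    have hτ0 : 0 < τ := hs.trans hτ.1
    rw [norm_mul, norm_of_nonneg (zpow_pos hτ0 k).le, zpow_add_one₀ hτ0.ne']
    calc τ ^ k * |f τ| ≤ τ ^ k * (a + b * τ) := by
          gcongr; exact hfab τ (Ioc_subset_Icc_self hτ)
      _ = a * τ ^ k + b * (τ ^ k * τ) := by ring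
  have hint₁ : IntervalIntegrable (fun τ : ℝ => a * τ ^ k) volume s 1 :=
    (continuousOn_const.mul (hzpow k)).intervalIntegrable
  have hint₂ : IntervalIntegrable (fun τ : ℝ => b * τ ^ (k + 1)) volume s 1 :=
    (continuousOn_const.mul (hzpow _)).intervalIntegrable
  calc |∫ τ in s..1, τ ^ k * f τ|
      ≤ ∫ τ in s..1, (a * τ ^ k + b * τ ^ (k + 1)) :=
        norm_integral_le_of_norm_le hs1 (Eventually.of_forall hmaj) (hint₁.add hint₂)
    _ = (a * ∫ τ in s..1, τ ^ k) + b * ∫ τ in s..1, τ ^ (k + 1) := by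
        rw [integral_add hint₁ hint₂, intervalIntegral.integral_const_mul,
          intervalIntegral.integral_const_mul]
    _ ≤ a * (s ^ (k + 1) / c) + b * (s ^ (k + 1 + 1) / c) :=
        add_le_add (mul_le_mul_of_nonneg_left (integral_zpow_le_div hs hs1 hc (by linarith)) ha)
          (mul_le_mul_of_nonneg_left
            (integral_zpow_le_div (k := k + 1) hs hs1 hc (by push_cast; linarith)) hb)
    _ = (a + b * s) / c * s ^ (k + 1) := by rw [zpow_add_one₀ hs.ne' (k + 1)]; ring

lemma abs_zpow_mul_integral_zpow_mul_le {f : ℝ → ℝ} {n : ℕ} {s a b : ℝ} (hn : 1 ≤ n) (hs : 0 < s)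
    (hs1 : s ≤ 1) (ha : 0 ≤ a) (hb : 0 ≤ b) (hfab : ∀ τ ∈ Icc s 1, |f τ| ≤ a + b * τ) :
    |s ^ (8 * (n:ℤ) - 1) * ∫ τ in s..1, τ ^ (1 - 4 * (n:ℤ)) * f τ|
      ≤ (a + b * s) / n * s ^ (4 * n + 1) := by
  have hn₁ : (1:ℝ) ≤ n := by exact_mod_cast hn
  have hint := abs_integral_zpow_mul_le_s8 (c := n) (k := 1 - 4 * n) hs hs1 (by linarith)
    (by push_cast; linarith) ha hb hfab
  rw [abs_mul, abs_of_pos (zpow_pos hs _)]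
  calc s ^ (8 * (n:ℤ) - 1) * |∫ τ in s..1, τ ^ (1 - 4 * (n:ℤ)) * f τ|
      ≤ s ^ (8 * (n:ℤ) - 1) * ((a + b * s) / n * s ^ (1 - 4 * (n:ℤ) + 1)) :=
        mul_le_mul_of_nonneg_left hint (zpow_pos hs _).le
    _ = (a + b * s) / n * s ^ (4 * n + 1) := by
        rw [mul_left_comm, ← zpow_add₀ hs.ne', ← zpow_natCast]; push_cast; ring_nf

lemma continuousOn_integral_Ioc {h : ℝ → ℝ} {a b : ℝ} (hh : ContinuousOn h (Ioc a b)) :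
    ContinuousOn (fun s => ∫ τ in s..b, h τ) (Ioc a b) := by
  intro x hx
  obtain ⟨c, hac, hcx⟩ := exists_between hx.1
  have hcb : c ≤ b := hcx.le.trans hx.2
  have hc : ContinuousOn h (uIcc c b) := hh.mono fun y hy => by
    rw [uIcc_of_le hcb] at hy; exact ⟨hac.trans_le hy.1, hy.2⟩
  have hprim :=
    continuousOn_primitive_interval_left (hc.integrableOn_compact (μ := volume) isCompact_uIcc)
  rw [uIcc_of_le hcb] at hprim
  exact (hprim x ⟨hcx.le, hx.2⟩).mono_of_mem_nhdsWithin
    (mem_nhdsWithin.2 ⟨Ioi c, isOpen_Ioi, hcx, fun y hy => ⟨hy.1.le, hy.2.2⟩⟩)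

lemma intervalIntegrable_of_continuousOn_Ioc {φ g : ℝ → ℝ} {a b : ℝ} (hab : a ≤ b)
    (hφ : ContinuousOn φ (Ioc a b)) (hg : IntervalIntegrable g volume a b)
    (hφg : ∀ s ∈ Ioc a b, |φ s| ≤ g s) : IntervalIntegrable φ volume a b := by
  rw [← uIoc_of_le hab] at hφ hφg
  exact hg.mono_fun' (hφ.aestronglyMeasurable measurableSet_uIoc)
    ((ae_restrict_iff' measurableSet_uIoc).2 (Eventually.of_forall hφg))

lemma abs_deriv_le_of_eq_zpow_mul_integral {fn φ : ℝ → ℝ} {b r K : ℝ} (m : ℕ) (hr : 0 < r)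
    (hrb : r < b) (hφ : ContinuousOn φ (Ioo 0 b)) (hφK : ∀ s ∈ Ioc 0 r, |φ s| ≤ K * s ^ (m + 1))
    (hfn : fn =ᶠ[𝓝 r] fun x => -(x ^ (-(m : ℤ))) * ∫ s in 0..x, φ s) :
    |deriv fn r| ≤ 2 * K * r := by
  have hK : 0 ≤ K :=
    nonneg_of_mul_nonneg_left ((abs_nonneg _).trans (hφK r ⟨hr, le_rfl⟩)) (by positivity)
  have hpow : IntervalIntegrable (fun s : ℝ => K * s ^ (m + 1)) volume 0 r :=
    (continuous_const.mul (continuous_pow _)).intervalIntegrable 0 r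
  have hint : IntervalIntegrable φ volume 0 r :=
    intervalIntegrable_of_continuousOn_Ioc hr.le
      (hφ.mono fun s hs => ⟨hs.1, hs.2.trans_lt hrb⟩) hpow hφK
  have hH : HasDerivAt (fun x => ∫ s in 0..x, φ s) (φ r) r :=
    integral_hasDerivAt_right hint (hφ.stronglyMeasurableAtFilter isOpen_Ioo r ⟨hr, hrb⟩)
      (hφ.continuousAt (Ioo_mem_nhds hr hrb))
  have hHr : |∫ s in 0..r, φ s| ≤ K * (r ^ (m + 2) / (m + 2)) := by
    calc |∫ s in 0..r, φ s| ≤ ∫ s in 0..r, K * s ^ (m + 1) :=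
          norm_integral_le_of_norm_le (f := φ) hr.le (Eventually.of_forall hφK) hpow
      _ = K * (r ^ (m + 2) / (m + 2)) := by
          rw [intervalIntegral.integral_const_mul, integral_pow]; push_cast; ring
  have hderiv : HasDerivAt (fun x => -(x ^ (-(m : ℤ))) * ∫ s in 0..x, φ s) _ r :=
    (hasDerivAt_zpow _ r (Or.inl hr.ne')).neg.mul hH
  rw [hfn.deriv_eq, hderiv.deriv]
  have e1 : r ^ (-(m : ℤ) - 1) = (r ^ (m + 1))⁻¹ := by
    rw [← zpow_natCast, ← zpow_neg]; push_cast; ring_nf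
  have e2 : r ^ (-(m : ℤ)) = (r ^ m)⁻¹ := by rw [zpow_neg, zpow_natCast]
  calc |-(((-(m : ℤ) : ℤ) : ℝ) * r ^ (-(m : ℤ) - 1)) * (∫ s in 0..r, φ s)
        + -r ^ (-(m : ℤ)) * φ r|
      ≤ m * (r ^ (m + 1))⁻¹ * |∫ s in 0..r, φ s| + (r ^ m)⁻¹ * |φ r| := by
        refine (abs_add_le _ _).trans_eq ?_
        rw [e1, e2, abs_mul, abs_mul, abs_neg, abs_neg, abs_mul]
        simp [abs_of_pos hr]
    _ ≤ m * (r ^ (m + 1))⁻¹ * (K * (r ^ (m + 2) / (m + 2)))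
          + (r ^ m)⁻¹ * (K * r ^ (m + 1)) := by
        gcongr; exact hφK r ⟨hr, le_rfl⟩
    _ = K * r * (m / (m + 2) + 1) := by field_simp; ring
    _ ≤ 2 * K * r := by
        have : (m : ℝ) / (m + 2) ≤ 1 := (div_le_one (by positivity)).2 (by linarith)
        nlinarith [mul_nonneg hK hr.le]

theorem stmt8 :
    ∃ C > (0:ℝ), ∀ (fbar : ℝ → ℝ),
      (∀ r ∈ Set.Icc (0:ℝ) 1, 0 ≤ fbar r) →
      (∀ x ∈ Set.Icc (0:ℝ) 1, DifferentiableAt ℝ fbar x) →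
      ContinuousOn (deriv fbar) (Set.Icc 0 1) →
      ConcaveOn ℝ (Set.Icc 0 1) fbar →
      fbar 1 = 0 →
      ∀ (f : ℝ → ℝ), ContinuousOn f (Set.Icc 0 1) →
      (∀ r ∈ Set.Icc (0:ℝ) 1, |f r| ≤ fbar r) →
      ∀ (n : ℕ), 1 ≤ n →
      ∀ (fn : ℝ → ℝ),
      (∀ r ∈ Set.Ioo (0:ℝ) 1,
        fn r = -(r ^ (-(4 * (n:ℤ)))) *
          ∫ s in (0:ℝ)..r, s ^ (8 * (n:ℤ) - 1) * ∫ τ in s..(1:ℝ), τ ^ (1 - 4 * (n:ℤ)) * f τ) →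
      ∀ r ∈ Set.Ioo (0:ℝ) 1,
        |deriv fn r| ≤ C * r / (n:ℝ) *
            (sSup (fbar '' Set.Icc 0 r) +
              sSup ((fun τ => τ * deriv fbar τ) '' Set.Icc 0 r)) := by
  refine ⟨2, two_pos, ?_⟩
  intro fbar hfbar_nonneg hfbar_diff hfbar_deriv hfbar_concave _ f hf hf_le n hn fn hfn r hr
  set M₁ := sSup (fbar '' Icc 0 r)
  set M₂ := sSup ((fun τ => τ * deriv fbar τ) '' Icc 0 r)
  have hsub : Icc 0 r ⊆ Icc (0:ℝ) 1 := Icc_subset_Icc_right hr.2.le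
  have hM₁ : 0 ≤ M₁ := (hfbar_nonneg 0 (left_mem_Icc.2 zero_le_one)).trans
    (ContinuousOn.le_sSup_image_Icc
      (fun x hx => (hfbar_diff x (hsub hx)).continuousAt.continuousWithinAt)
      (left_mem_Icc.2 hr.1.le))
  have hM₂ : 0 ≤ M₂ := sSup_image_Icc_mul_nonneg (hfbar_deriv.mono hsub) hr.1.le
  have hmaj : ∀ τ ∈ Icc (0:ℝ) 1, |f τ| ≤ M₁ + M₂ / r * τ := fun τ hτ =>
    (hf_le τ hτ).trans
      (hfbar_concave.le_sSup_add_sSup_div_mul hfbar_diff hfbar_deriv ⟨hr.1, hr.2.le⟩ hτ)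
  set G := fun s => ∫ τ in s..1, τ ^ (1 - 4 * (n:ℤ)) * f τ
  have hG : ∀ s ∈ Ioc 0 r, |s ^ (8 * (n:ℤ) - 1) * G s| ≤ (M₁ + M₂) / n * s ^ (4 * n + 1) := by
    intro s hs
    refine (abs_zpow_mul_integral_zpow_mul_le hn hs.1 (hs.2.trans hr.2.le) hM₁
      (div_nonneg hM₂ hr.1.le) fun τ hτ => hmaj τ ⟨hs.1.le.trans hτ.1, hτ.2⟩).trans ?_
    have : M₂ / r * s ≤ M₂ := by
      rw [div_mul_eq_mul_div, div_le_iff₀ hr.1]; exact mul_le_mul_of_nonneg_left hs.2 hM₂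
    have := hs.1
    gcongr
  have hcont : ContinuousOn (fun s => s ^ (8 * (n:ℤ) - 1) * G s) (Ioo 0 1) :=
    (continuousOn_id.zpow₀ _ fun s hs => Or.inl hs.1.ne').mul
      ((continuousOn_integral_Ioc ((continuousOn_id.zpow₀ _ fun s hs => Or.inl hs.1.ne').mul
        (hf.mono Ioc_subset_Icc_self))).mono Ioo_subset_Ioc_self)
  have hfn_eq : fn =ᶠ[𝓝 r] fun x => -(x ^ (-((4 * n : ℕ) : ℤ))) *
      ∫ s in 0..x, s ^ (8 * (n:ℤ) - 1) * G s := by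
    filter_upwards [Ioo_mem_nhds hr.1 hr.2] with x hx
    rw [hfn x hx]; push_cast; rfl
  calc |deriv fn r| ≤ 2 * ((M₁ + M₂) / n) * r :=
        abs_deriv_le_of_eq_zpow_mul_integral (4 * n) hr.1 hr.2 hcont hG hfn_eq
    _ = 2 * r / n * (M₁ + M₂) := by ring
end

section
/- For all real numbers $x_1>0$ and $x_2>0$: $\int_{0}^{x_1}\int_{0}^{x_2} \frac{x_2\, z_1}{(z_1^2+z_2^2)(z_1^2+x_2^2)}\,dz_2\,dz_1 \;\le\; \frac{\pi^2}{4}.$ -/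
/-!
The inner integral is elementary: it equals `x₂ / (z₁² + x₂²) * arctan (x₂ / z₁)`.
Bounding the arctangent by `π / 2` leaves `π / 2 * x₂ / (x₂² + z₁²)`, whose integral over
`[0, x₁]` is `π / 2 * arctan (x₁ / x₂) ≤ π² / 4`.
-/

open Real MeasureTheory intervalIntegral

namespace intervalIntegral

/-- Unlike `integral_mono_on`, only the larger function needs to be integrable. -/
theorem integral_mono_on_of_nonneg {μ : Measure ℝ} {f g : ℝ → ℝ} {a b : ℝ} (hab : a ≤ b)
    (hg : IntervalIntegrable g μ a b) (hf : ∀ x ∈ Set.Icc a b, 0 ≤ f x)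
    (h : ∀ x ∈ Set.Icc a b, f x ≤ g x) :
    ∫ x in a..b, f x ∂μ ≤ ∫ x in a..b, g x ∂μ := by
  rw [integral_of_le hab, integral_of_le hab]
  exact integral_mono_of_nonneg
    (ae_restrict_of_forall_mem measurableSet_Ioc fun x hx => hf x (Set.Ioc_subset_Icc_self hx))
    hg.1 (ae_restrict_of_forall_mem measurableSet_Ioc fun x hx => h x (Set.Ioc_subset_Icc_self hx))

end intervalIntegral

/-- At `z = 0` both sides vanish, the right one because `x / 0 = 0`. -/
theorem integral_kernel_eq (x z : ℝ) :
    ∫ t in (0:ℝ)..x, x * z / ((z ^ 2 + t ^ 2) * (z ^ 2 + x ^ 2))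
      = x / (z ^ 2 + x ^ 2) * arctan (x / z) := by
  have hsplit : ∀ t : ℝ, x * z / ((z ^ 2 + t ^ 2) * (z ^ 2 + x ^ 2))
      = x / (z ^ 2 + x ^ 2) * (z / (z ^ 2 + t ^ 2)) := fun t => by
    rw [div_mul_div_comm, mul_comm (z ^ 2 + x ^ 2)]
  simp only [hsplit, intervalIntegral.integral_const_mul, integral_div_sq_add_sq, zero_div,
    arctan_zero, sub_zero]

theorem kernel_integral_nonneg {x z : ℝ} (hx : 0 ≤ x) (hz : 0 ≤ z) :
    0 ≤ x / (z ^ 2 + x ^ 2) * arctan (x / z) :=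
  mul_nonneg (by positivity) (arctan_nonneg.mpr (by positivity))

theorem kernel_integral_le {x z : ℝ} (hx : 0 ≤ x) :
    x / (z ^ 2 + x ^ 2) * arctan (x / z) ≤ π / 2 * (x / (x ^ 2 + z ^ 2)) := by
  rw [mul_comm, add_comm (z ^ 2)]
  gcongr
  exact (arctan_lt_pi_div_two _).le

theorem stmt13 (x₁ x₂ : ℝ) (h1 : 0 < x₁) (h2 : 0 < x₂) :
    (∫ z₁ in (0:ℝ)..x₁, ∫ z₂ in (0:ℝ)..x₂,
        x₂ * z₁ / ((z₁ ^ 2 + z₂ ^ 2) * (z₁ ^ 2 + x₂ ^ 2)))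
      ≤ π ^ 2 / 4 := by
  simp only [integral_kernel_eq]
  have hcont : Continuous fun z : ℝ => π / 2 * (x₂ / (x₂ ^ 2 + z ^ 2)) :=
    continuous_const.mul (continuous_const.div (by fun_prop) fun z => by positivity)
  calc ∫ z in (0:ℝ)..x₁, x₂ / (z ^ 2 + x₂ ^ 2) * arctan (x₂ / z)
      ≤ ∫ z in (0:ℝ)..x₁, π / 2 * (x₂ / (x₂ ^ 2 + z ^ 2)) :=
        integral_mono_on_of_nonneg h1.le (hcont.intervalIntegrable _ _)
          (fun z hz => kernel_integral_nonneg h2.le hz.1) fun _ _ => kernel_integral_le h2.le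
    _ = π / 2 * arctan (x₁ / x₂) := by
        simp only [intervalIntegral.integral_const_mul, integral_div_sq_add_sq, zero_div,
          arctan_zero, sub_zero]
    _ ≤ π / 2 * (π / 2) := by gcongr; exact (arctan_lt_pi_div_two _).le
    _ = π ^ 2 / 4 := by ring
end

section
/- There exists a universal constant $C>0$ such that for all real numbers $x_1,x_2$ with $0<x_2<x_1$: $\int_{2x_2}^{2x_1}\int_{x_1/2}^{2x_1} \frac{y_2\,|y_1-x_1|}{\big((y_1-x_1)^2+(y_2-x_2)^2\big)\big((y_1-x_1)^2+(y_2+x_2)^2\big)}\,dy_1\,dy_2 \;\le\; C\log\Big(1+\frac{x_1}{x_2}\Big).$ -/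
open Real MeasureTheory intervalIntegral

lemma aux_arctan16 (b u v : ℝ) (hb : 0 < b) :
    (∫ t in u..v, 1 / (t ^ 2 + b ^ 2)) ≤ π / b := by
  have hb' : b ≠ 0 := hb.ne'
  have h1 : ∀ t : ℝ, 1 / (t ^ 2 + b ^ 2) = (1 / b ^ 2) * (1 / (1 + (t / b) ^ 2)) := by
    intro t
    have h0 : (0:ℝ) < t ^ 2 + b ^ 2 := by positivity
    field_simp
    ring
  have hcalc : (∫ t in u..v, 1 / (t ^ 2 + b ^ 2))
      = (1 / b ^ 2) * (b * (arctan (v / b) - arctan (u / b))) := by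
    calc (∫ t in u..v, 1 / (t ^ 2 + b ^ 2))
        = ∫ t in u..v, (1 / b ^ 2) * ((fun s => 1 / (1 + s ^ 2)) (t / b)) := by
          simp only [h1]
      _ = (1 / b ^ 2) * ∫ t in u..v, (fun s => 1 / (1 + s ^ 2)) (t / b) :=
          intervalIntegral.integral_const_mul _ _
      _ = (1 / b ^ 2) * (b • ∫ s in u / b..v / b, 1 / (1 + s ^ 2)) := by
          rw [intervalIntegral.integral_comp_div (fun s => 1 / (1 + s ^ 2)) hb']
      _ = (1 / b ^ 2) * (b * (arctan (v / b) - arctan (u / b))) := by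
          rw [integral_one_div_one_add_sq]; simp [smul_eq_mul]
  rw [hcalc]
  have h2 : arctan (v / b) - arctan (u / b) ≤ π := by
    have := Real.arctan_lt_pi_div_two (v / b)
    have := Real.neg_pi_div_two_lt_arctan (u / b)
    linarith
  have hb2 : (0:ℝ) < b ^ 2 := by positivity
  rw [div_eq_mul_inv π b]
  have : (1 / b ^ 2) * (b * (arctan (v / b) - arctan (u / b)))
      = (arctan (v / b) - arctan (u / b)) * b⁻¹ := by
    field_simp
  rw [this]
  exact mul_le_mul_of_nonneg_right h2 (by positivity)

lemma inner_bound16 (x₁ x₂ y₂ : ℝ) (hx₂ : 0 < x₂) (hx : x₂ < x₁) (hy : x₂ < y₂) :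
    (∫ y₁ in (x₁ / 2)..(2 * x₁),
        y₂ * |y₁ - x₁| /
          (((y₁ - x₁) ^ 2 + (y₂ - x₂) ^ 2) * ((y₁ - x₁) ^ 2 + (y₂ + x₂) ^ 2)))
      ≤ π / (2 * (y₂ - x₂)) := by
  have hx₁ : 0 < x₁ := hx₂.trans hx
  have ha : 0 < y₂ - x₂ := by linarith
  have hb : 0 < y₂ + x₂ := by linarith
  have hy0 : 0 < y₂ := hx₂.trans hy
  have hle : x₁ / 2 ≤ 2 * x₁ := by linarith
  set c := y₂ / (2 * (y₂ - x₂)) with hc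
  have hc0 : 0 ≤ c := by positivity
  have hfc : Continuous fun t : ℝ =>
      y₂ * |t - x₁| / (((t - x₁) ^ 2 + (y₂ - x₂) ^ 2) * ((t - x₁) ^ 2 + (y₂ + x₂) ^ 2)) := by
    apply Continuous.div (by continuity) (by continuity)
    intro t; positivity
  have hgc : Continuous fun t : ℝ => c * (1 / ((t - x₁) ^ 2 + (y₂ + x₂) ^ 2)) := by
    apply Continuous.mul continuous_const
    apply Continuous.div continuous_const (by continuity)
    intro t; positivity
  have step1 : (∫ y₁ in (x₁ / 2)..(2 * x₁),
        y₂ * |y₁ - x₁| /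
          (((y₁ - x₁) ^ 2 + (y₂ - x₂) ^ 2) * ((y₁ - x₁) ^ 2 + (y₂ + x₂) ^ 2)))
      ≤ ∫ y₁ in (x₁ / 2)..(2 * x₁), c * (1 / ((y₁ - x₁) ^ 2 + (y₂ + x₂) ^ 2)) := by
    apply intervalIntegral.integral_mono_on hle
      (hfc.intervalIntegrable _ _) (hgc.intervalIntegrable _ _)
    intro t ht
    set s := t - x₁ with hs
    have hD1 : (0:ℝ) < s ^ 2 + (y₂ - x₂) ^ 2 := by positivity
    have hD2 : (0:ℝ) < s ^ 2 + (y₂ + x₂) ^ 2 := by positivity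
    have hrhs : c * (1 / (s ^ 2 + (y₂ + x₂) ^ 2))
        = y₂ / ((2 * (y₂ - x₂)) * (s ^ 2 + (y₂ + x₂) ^ 2)) := by
      rw [hc]; field_simp
    rw [hrhs, div_le_div_iff₀ (by positivity) (by positivity)]
    have key : y₂ * |s| * (2 * (y₂ - x₂)) ≤ y₂ * (s ^ 2 + (y₂ - x₂) ^ 2) := by
      nlinarith [sq_nonneg (|s| - (y₂ - x₂)), sq_abs s, abs_nonneg s, hy0.le]
    nlinarith [mul_le_mul_of_nonneg_right key hD2.le, hD2.le, hy0.le]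
  have step2 : (∫ y₁ in (x₁ / 2)..(2 * x₁), c * (1 / ((y₁ - x₁) ^ 2 + (y₂ + x₂) ^ 2)))
      ≤ c * (π / (y₂ + x₂)) := by
    rw [intervalIntegral.integral_const_mul]
    apply mul_le_mul_of_nonneg_left _ hc0
    have hsub : (∫ y₁ in (x₁ / 2)..(2 * x₁), 1 / ((y₁ - x₁) ^ 2 + (y₂ + x₂) ^ 2))
        = ∫ t in (x₁ / 2 - x₁)..(2 * x₁ - x₁), 1 / (t ^ 2 + (y₂ + x₂) ^ 2) :=
      intervalIntegral.integral_comp_sub_right (fun t => 1 / (t ^ 2 + (y₂ + x₂) ^ 2)) x₁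
    rw [hsub]
    exact aux_arctan16 _ _ _ hb
  have step3 : c * (π / (y₂ + x₂)) ≤ π / (2 * (y₂ - x₂)) := by
    rw [hc, div_mul_div_comm, div_le_div_iff₀ (by positivity) (by positivity)]
    nlinarith [mul_pos pi_pos (mul_pos ha hx₂)]
  linarith

theorem stmt16 :
    ∃ C > (0:ℝ), ∀ x₁ x₂ : ℝ, 0 < x₂ → x₂ < x₁ →
      (∫ y₂ in (2 * x₂)..(2 * x₁), ∫ y₁ in (x₁ / 2)..(2 * x₁),
          y₂ * |y₁ - x₁| /
            (((y₁ - x₁) ^ 2 + (y₂ - x₂) ^ 2) * ((y₁ - x₁) ^ 2 + (y₂ + x₂) ^ 2)))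
        ≤ C * Real.log (1 + x₁ / x₂) := by
  refine ⟨π, Real.pi_pos, ?_⟩
  intro x₁ x₂ hx₂ hx
  have hx₁ : 0 < x₁ := hx₂.trans hx
  have hle : 2 * x₂ ≤ 2 * x₁ := by linarith
  have hle' : x₁ / 2 ≤ 2 * x₁ := by linarith
  -- the majorant
  set H : ℝ → ℝ := fun y₂ => π / (2 * (y₂ - x₂)) with hH
  have hHcont : ContinuousOn H (Set.uIcc (2 * x₂) (2 * x₁)) := by
    apply ContinuousOn.div continuousOn_const (by fun_prop)
    intro y hy
    rw [Set.uIcc_of_le hle, Set.mem_Icc] at hy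
    have : 0 < y - x₂ := by linarith [hy.1]
    positivity
  have hHint : IntervalIntegrable H volume (2 * x₂) (2 * x₁) :=
    hHcont.intervalIntegrable
  -- monotonicity step
  have mono : (∫ y₂ in (2 * x₂)..(2 * x₁), ∫ y₁ in (x₁ / 2)..(2 * x₁),
          y₂ * |y₁ - x₁| /
            (((y₁ - x₁) ^ 2 + (y₂ - x₂) ^ 2) * ((y₁ - x₁) ^ 2 + (y₂ + x₂) ^ 2)))
        ≤ ∫ y₂ in (2 * x₂)..(2 * x₁), H y₂ := by
    rw [intervalIntegral.integral_of_le hle, intervalIntegral.integral_of_le hle]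
    apply integral_mono_of_nonneg
    · filter_upwards [ae_restrict_mem measurableSet_Ioc] with y hy
      apply intervalIntegral.integral_nonneg hle'
      intro u hu
      have hy0 : (0:ℝ) ≤ y := by
        have := hy.1; linarith
      positivity
    · exact (intervalIntegrable_iff_integrableOn_Ioc_of_le hle).mp hHint
    · filter_upwards [ae_restrict_mem measurableSet_Ioc] with y hy
      exact inner_bound16 x₁ x₂ y hx₂ hx (by linarith [hy.1])
  -- compute the integral of H
  have hcomp : (∫ y₂ in (2 * x₂)..(2 * x₁), H y₂)
      = (π / 2) * Real.log ((2 * x₁ - x₂) / x₂) := by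
    have h1 : ∀ y : ℝ, H y = (π / 2) * ((fun t => 1 / t) (y - x₂)) := by
      intro y; rw [hH]; simp only [div_eq_mul_inv, one_div, mul_inv]; ring
    calc (∫ y₂ in (2 * x₂)..(2 * x₁), H y₂)
        = ∫ y₂ in (2 * x₂)..(2 * x₁), (π / 2) * ((fun t => 1 / t) (y₂ - x₂)) := by
          simp only [h1]
      _ = (π / 2) * ∫ y₂ in (2 * x₂)..(2 * x₁), (fun t => 1 / t) (y₂ - x₂) :=
          intervalIntegral.integral_const_mul _ _
      _ = (π / 2) * ∫ t in (2 * x₂ - x₂)..(2 * x₁ - x₂), 1 / t := by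
          rw [intervalIntegral.integral_comp_sub_right (fun t => 1 / t) x₂]
      _ = (π / 2) * Real.log ((2 * x₁ - x₂) / (2 * x₂ - x₂)) := by
          rw [integral_one_div]
          intro h0
          rw [Set.mem_uIcc] at h0
          rcases h0 with h0 | h0 <;> linarith [h0.1, h0.2]
      _ = (π / 2) * Real.log ((2 * x₁ - x₂) / x₂) := by
          have h2 : 2 * x₂ - x₂ = x₂ := by ring
          rw [h2]
  -- final estimate
  have hr : 1 < x₁ / x₂ := (one_lt_div hx₂).mpr hx
  have hlhs : (0:ℝ) < (2 * x₁ - x₂) / x₂ := by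
    have : (0:ℝ) < 2 * x₁ - x₂ := by linarith
    positivity
  have hineq : (2 * x₁ - x₂) / x₂ ≤ (1 + x₁ / x₂) ^ 2 := by
    have he : (2 * x₁ - x₂) / x₂ = 2 * (x₁ / x₂) - 1 := by field_simp
    rw [he]
    nlinarith [sq_nonneg (x₁ / x₂ - 1)]
  have hlog : Real.log ((2 * x₁ - x₂) / x₂) ≤ Real.log ((1 + x₁ / x₂) ^ 2) :=
    Real.log_le_log hlhs hineq
  have hpow : Real.log ((1 + x₁ / x₂) ^ 2) = 2 * Real.log (1 + x₁ / x₂) := by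
    rw [Real.log_pow]; norm_num
  have final : (π / 2) * Real.log ((2 * x₁ - x₂) / x₂) ≤ π * Real.log (1 + x₁ / x₂) := by
    have h2 : Real.log ((2 * x₁ - x₂) / x₂) ≤ 2 * Real.log (1 + x₁ / x₂) := by
      rw [← hpow]; exact hlog
    nlinarith [pi_pos]
  linarith [mono, hcomp.le, hcomp.ge, final]
end

section
/- Let $a,b>0$ be real numbers with $b^2 \ge \tfrac{5}{3}a^2$ and let $\gamma\ge 0$. Then $e^{3\gamma}b^2 + e^{-5\gamma}a^2 \;\ge\; a^2+b^2$; that is, $\big|\big(e^{\frac{3}{2}\gamma}b,\; e^{-\frac{5}{2}\gamma}a\big)\big| \ge |(a,b)|$ in the Euclidean norm on $\mathbb R^2$. -/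
open Real

theorem stmt18 (a b γ : ℝ) (ha : 0 < a) (hb : 0 < b)
    (hab : 5 / 3 * a ^ 2 ≤ b ^ 2) (hγ : 0 ≤ γ) :
    a ^ 2 + b ^ 2 ≤ Real.exp (3 * γ) * b ^ 2 + Real.exp (-5 * γ) * a ^ 2 ∧
    Real.sqrt (a ^ 2 + b ^ 2)
      ≤ Real.sqrt ((Real.exp (3 / 2 * γ) * b) ^ 2 + (Real.exp (-(5 / 2) * γ) * a) ^ 2) := by
  have h1 : 3 * γ + 1 ≤ Real.exp (3 * γ) := Real.add_one_le_exp _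
  have h2 : -5 * γ + 1 ≤ Real.exp (-5 * γ) := Real.add_one_le_exp _
  have key : a ^ 2 + b ^ 2 ≤ Real.exp (3 * γ) * b ^ 2 + Real.exp (-5 * γ) * a ^ 2 := by
    nlinarith [sq_nonneg a, sq_nonneg b]
  refine ⟨key, Real.sqrt_le_sqrt ?_⟩
  have e1 : (Real.exp (3 / 2 * γ) * b) ^ 2 = Real.exp (3 * γ) * b ^ 2 := by
    rw [mul_pow, ← Real.exp_nat_mul]; ring_nf
  have e2 : (Real.exp (-(5 / 2) * γ) * a) ^ 2 = Real.exp (-5 * γ) * a ^ 2 := by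
    rw [mul_pow, ← Real.exp_nat_mul]; ring_nf
  rw [e1, e2]; exact key
end
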